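/- Let F be a field, let M be an n×m matrix over F, and let R be the rook matrix of M. Then for all unitriangular matrices A ∈ T_n(F) and B ∈ T_m(F), the matrix A·M·B belongs to the set Ll(R); that is, (A·M·B)_{i,j} = R_{i,j} for every position (i,j) that is not covered with respect to R. -/

import Mathlib

/-- A square matrix is unitriangular if it is upper triangular with 1's on the diagonal. -/
def Matrix.IsUnitriangular {n : ℕ} {R : Type*} [Zero R] [One R]
    (A : Matrix (Fin n) (Fin n) R) : Prop :=
  (∀ i, A i i = 1) ∧ ∀ i j : Fin n, j < i → A i j = 0

/-- A matrix is a rook matrix if every row and every column contains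
at most one nonzero entry. -/
def Matrix.IsRook {n m : ℕ} {F : Type*} [Zero F]
    (R : Matrix (Fin n) (Fin m) F) : Prop :=
  (∀ i j j', R i j ≠ 0 → R i j' ≠ 0 → j = j') ∧
  (∀ i i' j, R i j ≠ 0 → R i' j ≠ 0 → i = i')

/-- A position `(i,j)` is covered w.r.t. a (rook) matrix `R` if there is a nonzero
entry of `R` at a position `(i',j')` with (i < i' and j ≥ j') or (i ≤ i' and j > j'). -/
def Matrix.Covered {n m : ℕ} {F : Type*} [Zero F]
    (R : Matrix (Fin n) (Fin m) F) (i : Fin n) (j : Fin m) : Prop :=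
  ∃ i' j', R i' j' ≠ 0 ∧ ((i < i' ∧ j' ≤ j) ∨ (i ≤ i' ∧ j' < j))


/-!
Write `R = A₀ M B₀`. Unitriangular matrices form a group, so `A M B = A' R B'` with `A'`, `B'`
unitriangular. In `(A' R B')ᵢⱼ = ∑ A'ᵢₖ Rₖₗ B'ₗⱼ` only terms with `i ≤ k` and `l ≤ j` survive, and
when `(i, j)` is not covered the only such `(k, l)` with `Rₖₗ ≠ 0` is `(i, j)` itself, whose term
is `Rᵢⱼ`.
-/

namespace Matrix

section UpperTriangular

variable {ι R : Type*} [Fintype ι] [LinearOrder ι]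

lemma IsUpperTriangular.mul_apply_self [NonUnitalNonAssocSemiring R] {A B : Matrix ι ι R}
    (hA : A.IsUpperTriangular) (hB : B.IsUpperTriangular) (i : ι) :
    (A * B) i i = A i i * B i i := by
  refine Fintype.sum_eq_single i fun k hk => ?_
  rcases hk.lt_or_gt with hki | hik
  · simp [hA hki]
  · simp [hB hik]

end UpperTriangular

section Unitriangular

variable {n : ℕ} {R : Type*}

lemma IsUnitriangular.isUpperTriangular [Zero R] [One R] {A : Matrix (Fin n) (Fin n) R}
    (hA : A.IsUnitriangular) : A.IsUpperTriangular :=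
  fun i j => hA.2 i j

lemma IsUnitriangular.mul [NonAssocSemiring R] {A B : Matrix (Fin n) (Fin n) R}
    (hA : A.IsUnitriangular) (hB : B.IsUnitriangular) : (A * B).IsUnitriangular :=
  ⟨fun i => by
    rw [hA.isUpperTriangular.mul_apply_self hB.isUpperTriangular, hA.1, hB.1, one_mul],
   fun _ _ h => hA.isUpperTriangular.mul hB.isUpperTriangular h⟩

lemma IsUnitriangular.det_eq_one [CommRing R] {A : Matrix (Fin n) (Fin n) R}
    (hA : A.IsUnitriangular) : A.det = 1 := by
  simp [det_of_isUpperTriangular hA.isUpperTriangular, hA.1]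

lemma IsUnitriangular.nonsing_inv_mul [CommRing R] {A : Matrix (Fin n) (Fin n) R}
    (hA : A.IsUnitriangular) : A⁻¹ * A = 1 :=
  A.nonsing_inv_mul (by simp [hA.det_eq_one])

lemma IsUnitriangular.mul_nonsing_inv [CommRing R] {A : Matrix (Fin n) (Fin n) R}
    (hA : A.IsUnitriangular) : A * A⁻¹ = 1 :=
  A.mul_nonsing_inv (by simp [hA.det_eq_one])

lemma IsUnitriangular.inv [CommRing R] {A : Matrix (Fin n) (Fin n) R}
    (hA : A.IsUnitriangular) : A⁻¹.IsUnitriangular := by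
  have : Invertible A := A.invertibleOfIsUnitDet (by simp [hA.det_eq_one])
  have hinv : A⁻¹.IsUpperTriangular := blockTriangular_inv_of_blockTriangular hA.isUpperTriangular
  refine ⟨fun i => ?_, fun _ _ h => hinv h⟩
  simpa [hinv.mul_apply_self hA.isUpperTriangular, hA.1] using
    congrFun₂ hA.nonsing_inv_mul i i

end Unitriangular

variable {n m : ℕ} {R : Type*}

lemma eq_of_not_covered [Zero R] {N : Matrix (Fin n) (Fin m) R} {i k : Fin n} {j l : Fin m}
    (hij : ¬ N.Covered i j) (hkl : N k l ≠ 0) (hik : i ≤ k) (hlj : l ≤ j) : k = i ∧ l = j := by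
  by_contra hne
  refine hij ⟨k, l, hkl, ?_⟩
  grind

lemma IsUnitriangular.mul_mul_apply_of_not_covered [NonAssocSemiring R]
    {A : Matrix (Fin n) (Fin n) R} {B : Matrix (Fin m) (Fin m) R} {N : Matrix (Fin n) (Fin m) R}
    (hA : A.IsUnitriangular) (hB : B.IsUnitriangular) {i : Fin n} {j : Fin m}
    (hij : ¬ N.Covered i j) : (A * N * B) i j = N i j := by
  have hterm : ∀ p : Fin n × Fin m, p ≠ (i, j) → A i p.1 * N p.1 p.2 * B p.2 j = 0 := by
    rintro ⟨k, l⟩ hkl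
    rcases lt_or_ge k i with hki | hik
    · simp [hA.2 i k hki]
    rcases lt_or_ge j l with hjl | hlj
    · simp [hB.2 l j hjl]
    by_cases hN0 : N k l = 0
    · simp [hN0]
    obtain ⟨rfl, rfl⟩ := eq_of_not_covered hij hN0 hik hlj
    exact absurd rfl hkl
  calc (A * N * B) i j = ∑ p : Fin n × Fin m, A i p.1 * N p.1 p.2 * B p.2 j := by
        simp only [mul_apply, Finset.sum_mul, Fintype.sum_prod_type]
        exact Finset.sum_comm
    _ = N i j := by rw [Fintype.sum_eq_single (i, j) hterm, hA.1, hB.1, one_mul, mul_one]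

end Matrix

theorem orbit_mem_bruhat_cell_general {F : Type*} [Field F] {n m : ℕ}
    (M R : Matrix (Fin n) (Fin m) F)
    (hRorb : ∃ (A₀ : Matrix (Fin n) (Fin n) F) (B₀ : Matrix (Fin m) (Fin m) F),
      A₀.IsUnitriangular ∧ B₀.IsUnitriangular ∧ A₀ * M * B₀ = R) :
    ∀ (A : Matrix (Fin n) (Fin n) F) (B : Matrix (Fin m) (Fin m) F),
      A.IsUnitriangular → B.IsUnitriangular →
      ∀ i j, ¬ R.Covered i j → (A * M * B) i j = R i j := by
  obtain ⟨A₀, B₀, hA₀, hB₀, rfl⟩ := hRorb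
  intro A B hA hB i j hij
  have hM : A * M * B = (A * A₀⁻¹) * (A₀ * M * B₀) * (B₀⁻¹ * B) :=
    calc A * M * B = A * (A₀⁻¹ * A₀) * M * (B₀ * B₀⁻¹) * B := by
          rw [hA₀.nonsing_inv_mul, hB₀.mul_nonsing_inv, Matrix.mul_one, Matrix.mul_one]
      _ = (A * A₀⁻¹) * (A₀ * M * B₀) * (B₀⁻¹ * B) := by simp only [Matrix.mul_assoc]
  rw [hM]
  exact (hA.mul hA₀.inv).mul_mul_apply_of_not_covered (hB₀.inv.mul hB) hij

/-- If `R` is the rook matrix of `M` (the unique rook matrix in the orbit of `M` under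
left/right multiplication by unitriangular matrices), then every matrix `A * M * B`
with `A`, `B` unitriangular agrees with `R` at every non-covered position. -/
theorem orbit_mem_bruhat_cell {F : Type*} [Field F] {n m : ℕ}
    (M R : Matrix (Fin n) (Fin m) F) (hRrook : R.IsRook)
    (hRorb : ∃ (A₀ : Matrix (Fin n) (Fin n) F) (B₀ : Matrix (Fin m) (Fin m) F),
      A₀.IsUnitriangular ∧ B₀.IsUnitriangular ∧ A₀ * M * B₀ = R) :
    ∀ (A : Matrix (Fin n) (Fin n) F) (B : Matrix (Fin m) (Fin m) F),
      A.IsUnitriangular → B.IsUnitriangular →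
      ∀ i j, ¬ R.Covered i j → (A * M * B) i j = R i j :=
  orbit_mem_bruhat_cell_general M R hRorb
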